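/- There exists a constant C″ > 0 such that for all real numbers a, c with a ≥ 1 and c ≥ a + 1, setting Q(a,c) = (cosh(a)·cosh(c) + 1)/(sinh(a)·sinh(c)), one has (√2/4)·e^{c−a} ≤ √(Q(a,c)² − 1)·sinh(c) ≤ C″·e^{c−a}. -/

import Mathlib

/-!
Since `(cosh a cosh c + 1)² - (sinh a sinh c)² = (cosh a + cosh c)²`, the quantity
`√(Q² - 1) · sinh c` is exactly `(cosh a + cosh c) / sinh a`. For `1 ≤ a ≤ c` the numerator lies
between `eᶜ / 2` and `2 eᶜ` and the denominator between `eᵃ / 4` and `eᵃ / 2`, so the quotient lies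
between `e^{c-a}` and `8 e^{c-a}`.
-/

namespace Real

lemma sq_cosh_mul_cosh_add_one_sub_sq_sinh_mul_sinh (a c : ℝ) :
    (cosh a * cosh c + 1) ^ 2 - (sinh a * sinh c) ^ 2 = (cosh a + cosh c) ^ 2 := by
  linear_combination (-sinh c ^ 2) * sinh_sq a - (cosh a ^ 2 - 1) * sinh_sq c

lemma sqrt_sq_cosh_mul_cosh_add_one_div_sub_one_mul_sinh {a c : ℝ} (ha : 0 < a) (hc : 0 < c) :
    √(((cosh a * cosh c + 1) / (sinh a * sinh c)) ^ 2 - 1) * sinh c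
      = (cosh a + cosh c) / sinh a := by
  have hsa : 0 < sinh a := sinh_pos_iff.mpr ha
  have hsc : 0 < sinh c := sinh_pos_iff.mpr hc
  have hsq : ((cosh a * cosh c + 1) / (sinh a * sinh c)) ^ 2 - 1
      = ((cosh a + cosh c) / (sinh a * sinh c)) ^ 2 := by
    field_simp
    linear_combination sq_cosh_mul_cosh_add_one_sub_sq_sinh_mul_sinh a c
  rw [hsq, sqrt_sq (by positivity)]
  field_simp

lemma exp_div_two_le_cosh (x : ℝ) : exp x / 2 ≤ cosh x := by
  rw [cosh_eq]
  linarith [exp_pos (-x)]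

lemma sinh_le_exp_div_two (x : ℝ) : sinh x ≤ exp x / 2 := by
  rw [sinh_eq]
  linarith [exp_pos (-x)]

lemma cosh_le_exp {x : ℝ} (hx : 0 ≤ x) : cosh x ≤ exp x := by
  rw [← exp_sub_sinh]
  linarith [sinh_nonneg_iff.mpr hx]

lemma exp_div_four_le_sinh {x : ℝ} (hx : log 2 ≤ 2 * x) : exp x / 4 ≤ sinh x := by
  have h2 : 2 ≤ exp x * exp x :=
    calc 2 = exp (log 2) := (exp_log two_pos).symm
      _ ≤ exp (2 * x) := exp_le_exp.mpr hx
      _ = exp x * exp x := by rw [two_mul, exp_add]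
  have hneg : exp (-x) * exp x = 1 := by rw [← exp_add, neg_add_cancel, exp_zero]
  rw [sinh_eq]
  nlinarith [exp_pos x]

lemma exp_sub_le_cosh_div_sinh (a c : ℝ) (ha : 0 < a) : exp (c - a) ≤ cosh c / sinh a := by
  have hsa : 0 < sinh a := sinh_pos_iff.mpr ha
  rw [le_div_iff₀ hsa, exp_sub]
  calc exp c / exp a * sinh a ≤ exp c / exp a * (exp a / 2) := by
        gcongr; exact sinh_le_exp_div_two a
    _ = exp c / 2 := by field_simp
    _ ≤ cosh c := exp_div_two_le_cosh c

lemma cosh_add_cosh_div_sinh_le {a c : ℝ} (ha : 1 ≤ a) (hac : a ≤ c) :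
    (cosh a + cosh c) / sinh a ≤ 8 * exp (c - a) := by
  have hsa : 0 < sinh a := sinh_pos_iff.mpr (by linarith)
  have hcosh : cosh a ≤ cosh c :=
    cosh_le_cosh.mpr (by rw [abs_of_nonneg (by linarith), abs_of_nonneg (by linarith)]; exact hac)
  have hsinh : exp a / 4 ≤ sinh a := exp_div_four_le_sinh (by linarith [log_two_lt_d9])
  rw [div_le_iff₀ hsa, exp_sub]
  calc cosh a + cosh c ≤ 2 * exp c := by linarith [cosh_le_exp (by linarith : 0 ≤ c)]
    _ = 8 * (exp c / exp a) * (exp a / 4) := by field_simp; ring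
    _ ≤ 8 * (exp c / exp a) * sinh a := by gcongr

end Real

open Real

/-- Intermediate estimate in the proof of the pentagon lemma (Lemma 8.1):
`(√2/4) e^{c-a} ≤ √(Q(a,c)² - 1) · sinh c ≤ C'' e^{c-a}`. -/
theorem pentagon_coshd_estimate :
    ∃ C'' : ℝ, 0 < C'' ∧ ∀ a c : ℝ, 1 ≤ a → a + 1 ≤ c →
      let Q := (Real.cosh a * Real.cosh c + 1) / (Real.sinh a * Real.sinh c)
      Real.sqrt 2 / 4 * Real.exp (c - a) ≤ Real.sqrt (Q ^ 2 - 1) * Real.sinh c ∧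
        Real.sqrt (Q ^ 2 - 1) * Real.sinh c ≤ C'' * Real.exp (c - a) := by
  refine ⟨8, by norm_num, fun a c ha hc => ?_⟩
  dsimp only
  rw [sqrt_sq_cosh_mul_cosh_add_one_div_sub_one_mul_sinh (by linarith) (by linarith)]
  refine ⟨?_, cosh_add_cosh_div_sinh_le ha (by linarith)⟩
  have hsqrt : √2 / 4 ≤ 1 := by linarith [sqrt_two_lt_three_halves]
  calc √2 / 4 * exp (c - a) ≤ exp (c - a) := mul_le_of_le_one_left (exp_pos _).le hsqrt
    _ ≤ cosh c / sinh a := exp_sub_le_cosh_div_sinh a c (by linarith)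
    _ ≤ (cosh a + cosh c) / sinh a :=
        div_le_div_of_nonneg_right (by linarith [cosh_pos a]) (sinh_pos_iff.mpr (by linarith)).le
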